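/- arXiv:1401.3659 — 5 statements merged into one kernel-verified Lean document; each statement's English description precedes it below -/
import Mathlib

section
/- For random variables S uniform-close to a k-bit uniform string given Z, i.e., if the statistical distance between the joint distribution (S,Z) and (U_k,Z) is at most ε (where U_k is uniform on {0,1}^k and independent of Z), then the conditional Shannon entropy satisfies H(S|Z) ≥ (1 − 1.25ε + ε log₂ ε) · k. -/
open scoped BigOperators Classical
noncomputable section

/-- Statistical distance between two mass functions on a finite set. -/
def SD {X : Type*} [Fintype X] (P Q : X → ℝ) : ℝ := (1/2) * ∑ x, |P x - Q x|

/-- Conditional Shannon entropy (in bits) H(S|Z) of a joint mass function `p` on `S × Z`. -/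
def condEnt {S Z : Type*} [Fintype S] [Fintype Z] (p : S × Z → ℝ) : ℝ :=
  ∑ z : Z, ∑ s : S,
    (if p (s, z) = 0 then 0 else -(p (s, z) * Real.logb 2 (p (s, z) / ∑ s' : S, p (s', z))))

lemma condEnt_nonneg {S Z : Type*} [Fintype S] [Fintype Z] (p : S × Z → ℝ)
    (hp0 : ∀ x, 0 ≤ p x) : 0 ≤ condEnt p := by
  unfold condEnt
  apply Finset.sum_nonneg; intro z _
  apply Finset.sum_nonneg; intro s _
  by_cases h : p (s, z) = 0
  · simp [h]
  · simp only [h, if_false]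
    have hpos : 0 < p (s, z) := lt_of_le_of_ne (hp0 _) (Ne.symm h)
    have hq : p (s, z) ≤ ∑ s' : S, p (s', z) :=
      Finset.single_le_sum (fun i _ => hp0 (i, z)) (Finset.mem_univ s)
    have hqpos : 0 < ∑ s' : S, p (s', z) := lt_of_lt_of_le hpos hq
    have hlog : Real.logb 2 (p (s, z) / ∑ s' : S, p (s', z)) ≤ 0 :=
      Real.logb_nonpos one_lt_two (by positivity) (by rw [div_le_one hqpos]; exact hq)
    nlinarith

/-- chord bound on [1,2] for the convex function `x * logb 2 x`. -/
lemma chord_bound (x : ℝ) (h1 : 1 ≤ x) (h2 : x ≤ 2) :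
    x * Real.logb 2 x ≤ 2 * (x - 1) := by
  have hx0 : 0 < x := lt_of_lt_of_le one_pos h1
  have hconv := Real.convexOn_mul_log
  have h := hconv.2 (Set.mem_Ici.2 (by norm_num : (0:ℝ) ≤ 1))
      (Set.mem_Ici.2 (by norm_num : (0:ℝ) ≤ 2))
      (by linarith : (0:ℝ) ≤ 2 - x) (by linarith : (0:ℝ) ≤ x - 1) (by ring)
  simp only [smul_eq_mul] at h
  have hxx : (2 - x) * 1 + (x - 1) * 2 = x := by ring
  rw [hxx, Real.log_one] at h
  -- h : x * Real.log x ≤ (2 - x) * (1 * 0) + (x - 1) * (2 * Real.log 2)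
  have hlog2 : 0 < Real.log 2 := Real.log_pos one_lt_two
  have hrw : x * Real.logb 2 x = (x * Real.log x) / Real.log 2 := by
    rw [Real.logb]; ring
  rw [hrw, div_le_iff₀ hlog2]
  nlinarith

lemma core_bound (k : ℕ) (hk : 1 ≤ k) (M x : ℝ) (hM : 2 * (k:ℝ) ≤ M)
    (hx1 : 1 < x) (hxk : x ≤ (2:ℝ) ^ k) :
    x * Real.logb 2 x ≤ M * (x - 1) := by
  have hx0 : 0 < x := lt_trans one_pos hx1
  have hk1 : (1:ℝ) ≤ (k:ℝ) := by exact_mod_cast hk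
  have hlogk : Real.logb 2 x ≤ (k:ℝ) := by
    calc Real.logb 2 x ≤ Real.logb 2 ((2:ℝ) ^ k) :=
          Real.logb_le_logb_of_le one_lt_two hx0 hxk
      _ = (k:ℝ) := by
          rw [Real.logb_pow, Real.logb_self_eq_one one_lt_two]; ring
  rcases le_or_gt 2 x with h2 | h2
  · have hxl : x * Real.logb 2 x ≤ x * (k:ℝ) :=
      mul_le_mul_of_nonneg_left hlogk hx0.le
    nlinarith
  · have hc := chord_bound x hx1.le h2.le
    nlinarith

lemma g_nonpos (ε : ℝ) (hε0 : 0 < ε) (hε1 : ε ≤ 1) (hL : -Real.logb 2 ε < 3/4) :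
    1 - 1.25 * ε + ε * Real.logb 2 ε ≤ 0 := by
  have h2 : (1:ℝ) < 2 := one_lt_two
  have hεlb : (2:ℝ) ^ (-(3/4) : ℝ) < ε := by
    have : -(3/4 : ℝ) < Real.logb 2 ε := by linarith
    exact (Real.lt_logb_iff_rpow_lt h2 hε0).1 this
  have hrp : ((2:ℝ) ^ (-(3/4) : ℝ)) ^ (4:ℕ) = 8⁻¹ := by
    rw [← Real.rpow_natCast ((2:ℝ) ^ (-(3/4):ℝ)) 4, ← Real.rpow_mul (by norm_num : (0:ℝ) ≤ 2)]
    norm_num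
  have hε4 : (8:ℝ)⁻¹ < ε ^ (4:ℕ) := by
    rw [← hrp]
    exact pow_lt_pow_left₀ hεlb (by positivity) (by norm_num)
  have hεlb' : (0.5945 : ℝ) < ε := by
    by_contra hc
    push_neg at hc
    have h4 := pow_le_pow_left₀ hε0.le hc 4
    norm_num at h4 hε4
    linarith
  have hlog : Real.log ε ≤ ε - 1 := Real.log_le_sub_one_of_pos hε0
  have hmul : ε * Real.log ε ≤ ε * (ε - 1) := by nlinarith
  have hl2a : (0.6931:ℝ) < Real.log 2 := by
    have := Real.log_two_gt_d9; linarith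
  have hl2b : Real.log 2 < 0.6932 := by
    have := Real.log_two_lt_d9; linarith
  have hgoal : ε * Real.log ε ≤ (1.25 * ε - 1) * Real.log 2 := by
    nlinarith [mul_nonneg (sub_nonneg.2 hεlb'.le) (sub_nonneg.2 hε1),
      mul_le_mul_of_nonneg_left hl2b.le (sub_nonneg.2 hεlb'.le)]
  have hrw : ε * Real.logb 2 ε = (ε * Real.log ε) / Real.log 2 := by
    rw [Real.logb]; ring
  have hfin : (ε * Real.log ε) / Real.log 2 ≤ 1.25 * ε - 1 := by
    rw [div_le_iff₀ (by linarith : (0:ℝ) < Real.log 2)]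
    linarith
  rw [hrw]; linarith

/-- If the joint distribution of `(S, Z)` is within statistical distance `ε` of `(U_k, Z)`
(`U_k` uniform on `{0,1}^k` independent of `Z`), then
`H(S|Z) ≥ (1 − 1.25 ε + ε log₂ ε) · k`. -/
theorem sd_close_uniform_implies_high_cond_entropy
    (k : ℕ) (Z : Type*) [Fintype Z] (ε : ℝ) (hε0 : 0 < ε) (hε1 : ε ≤ 1)
    (p : Fin (2 ^ k) × Z → ℝ) (hp0 : ∀ x, 0 ≤ p x) (hp1 : ∑ x, p x = 1)
    (hSD : SD p (fun x => ((2 : ℝ) ^ k)⁻¹ * ∑ s : Fin (2 ^ k), p (s, x.2)) ≤ ε) :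
    (1 - 1.25 * ε + ε * Real.logb 2 ε) * k ≤ condEnt p := by
  have hnn := condEnt_nonneg p hp0
  by_cases hL : 3/4 ≤ -Real.logb 2 ε
  swap
  · push_neg at hL
    have hg := g_nonpos ε hε0 hε1 hL
    have : (1 - 1.25 * ε + ε * Real.logb 2 ε) * k ≤ 0 :=
      mul_nonpos_of_nonpos_of_nonneg hg (Nat.cast_nonneg k)
    linarith
  rcases Nat.eq_zero_or_pos k with hk0 | hk1
  · subst hk0; simpa using hnn
  -- main case
  set B : Fin (2 ^ k) × Z → ℝ :=
    fun x => ((2 : ℝ) ^ k)⁻¹ * ∑ s : Fin (2 ^ k), p (s, x.2) with hBdef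
  set L : ℝ := -Real.logb 2 ε with hLdef
  set M : ℝ := (k:ℝ) * (1.25 + L) with hMdef
  have hk1' : (1:ℝ) ≤ (k:ℝ) := by exact_mod_cast hk1
  have hM2k : 2 * (k:ℝ) ≤ M := by nlinarith
  have hM0 : 0 ≤ M := by linarith
  have hN0 : (0:ℝ) < (2:ℝ) ^ k := by positivity
  -- sum of B is 1
  have hB1 : ∑ x, B x = 1 := by
    have h1 := Fintype.sum_prod_type_right (f := B)
    have h2 := Fintype.sum_prod_type_right (f := p)
    rw [h1]
    have hz : ∀ z : Z, ∑ s : Fin (2^k), B (s, z) = ∑ s : Fin (2^k), p (s, z) := by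
      intro z
      rw [hBdef]
      simp only [Finset.sum_const, Finset.card_univ, Fintype.card_fin, nsmul_eq_mul]
      push_cast
      rw [← mul_assoc, mul_inv_cancel₀ (ne_of_gt hN0), one_mul]
    rw [Finset.sum_congr rfl (fun z _ => hz z), ← h2, hp1]
  have hmaxle : ∑ x, max (p x - B x) 0 ≤ ε := by
    have hme : ∀ t : ℝ, max t 0 = (t + |t|)/2 := by
      intro t; rcases le_or_gt 0 t with h|h
      · rw [max_eq_left h, abs_of_nonneg h]; ring
      · rw [max_eq_right h.le, abs_of_neg h]; ring
    have hsum : ∑ x, max (p x - B x) 0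
        = ((∑ x, (p x - B x)) + ∑ x, |p x - B x|)/2 := by
      rw [Finset.sum_congr rfl (fun x _ => hme (p x - B x)), ← Finset.sum_div,
        Finset.sum_add_distrib]
    have hzero : ∑ x, (p x - B x) = 0 := by
      rw [Finset.sum_sub_distrib, hp1, hB1]; ring
    have hSD' : (1/2) * ∑ x, |p x - B x| ≤ ε := hSD
    rw [hsum, hzero]
    linarith
  -- pointwise bound
  have hpoint : ∀ (s : Fin (2^k)) (z : Z),
      (k:ℝ) * p (s, z) - M * max (p (s, z) - B (s, z)) 0
      ≤ (if p (s, z) = 0 then 0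
         else -(p (s, z) * Real.logb 2 (p (s, z) / ∑ s' : Fin (2^k), p (s', z)))) := by
    intro s z
    have ha0 : 0 ≤ p (s, z) := hp0 _
    have haq : p (s, z) ≤ ∑ s' : Fin (2^k), p (s', z) :=
      Finset.single_le_sum (fun i _ => hp0 (i, z)) (Finset.mem_univ s)
    have hq0 : 0 ≤ ∑ s' : Fin (2^k), p (s', z) := le_trans ha0 haq
    have hb : B (s, z) = ((2:ℝ)^k)⁻¹ * ∑ s' : Fin (2^k), p (s', z) := rfl
    set a := p (s, z)
    set q := ∑ s' : Fin (2^k), p (s', z)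
    set b := B (s, z)
    have hb0 : 0 ≤ b := by rw [hb]; exact mul_nonneg (by positivity) hq0
    by_cases hA : a = 0
    · rw [if_pos hA, hA]
      rw [max_eq_right (by linarith : (0:ℝ) - b ≤ 0)]
      norm_num
    · rw [if_neg hA]
      have ha : 0 < a := lt_of_le_of_ne ha0 (Ne.symm hA)
      have hqpos : 0 < q := lt_of_lt_of_le ha haq
      have hbpos : 0 < b := by rw [hb]; positivity
      have hqb : q = (2:ℝ)^k * b := by rw [hb, ← mul_assoc, mul_inv_cancel₀ (ne_of_gt hN0), one_mul]
      have hlogq : Real.logb 2 (a / q) = Real.logb 2 (a / b) - (k:ℝ) := by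
        have h1 : a / q = (a / b) / ((2:ℝ)^k) := by
          rw [hqb]; ring
        rw [h1, Real.logb_div (by positivity) (ne_of_gt hN0)]
        rw [Real.logb_pow, Real.logb_self_eq_one one_lt_two, mul_one]
      rw [hlogq]
      have hkey : a * Real.logb 2 (a / b) ≤ M * max (a - b) 0 := by
        rcases le_or_gt a b with hab | hab
        · rw [max_eq_right (by linarith : a - b ≤ 0), mul_zero]
          have : Real.logb 2 (a / b) ≤ 0 :=
            Real.logb_nonpos one_lt_two (by positivity) (by rw [div_le_one hbpos]; exact hab)
          exact mul_nonpos_of_nonneg_of_nonpos ha0 this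
        · rw [max_eq_left (by linarith : (0:ℝ) ≤ a - b)]
          have hx1 : 1 < a / b := (one_lt_div hbpos).2 hab
          have hxk : a / b ≤ (2:ℝ)^k := by
            rw [div_le_iff₀ hbpos, ← hqb]; exact haq
          have hcore := core_bound k hk1 M (a / b) hM2k hx1 hxk
          have hmul := mul_le_mul_of_nonneg_left hcore hb0
          have hba : b * (a / b) = a := by field_simp
          calc a * Real.logb 2 (a / b) = b * (a / b * Real.logb 2 (a / b)) := by
                rw [← mul_assoc, hba]
            _ ≤ b * (M * (a / b - 1)) := hmul
            _ = M * (b * (a / b) - b) := by ring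
            _ = M * (a - b) := by rw [hba]
      nlinarith
  -- assemble
  have hsum : ∑ z : Z, ∑ s : Fin (2^k),
      ((k:ℝ) * p (s, z) - M * max (p (s, z) - B (s, z)) 0) ≤ condEnt p := by
    unfold condEnt
    apply Finset.sum_le_sum; intro z _
    apply Finset.sum_le_sum; intro s _
    exact hpoint s z
  have hsplit : ∑ z : Z, ∑ s : Fin (2^k),
      ((k:ℝ) * p (s, z) - M * max (p (s, z) - B (s, z)) 0)
      = (k:ℝ) * (∑ z : Z, ∑ s : Fin (2^k), p (s, z))
        - M * (∑ z : Z, ∑ s : Fin (2^k), max (p (s, z) - B (s, z)) 0) := by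
    simp only [Finset.sum_sub_distrib, Finset.mul_sum]
  have hp1' : ∑ z : Z, ∑ s : Fin (2^k), p (s, z) = 1 := by
    rw [← Fintype.sum_prod_type_right (f := p)]; exact hp1
  have hmax' : ∑ z : Z, ∑ s : Fin (2^k), max (p (s, z) - B (s, z)) 0 ≤ ε := by
    rw [← Fintype.sum_prod_type_right (f := fun x : Fin (2^k) × Z => max (p x - B x) 0)]
    exact hmaxle
  have hMle : M * (∑ z : Z, ∑ s : Fin (2^k), max (p (s, z) - B (s, z)) 0) ≤ M * ε :=
    mul_le_mul_of_nonneg_left hmax' hM0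
  have hfin : (1 - 1.25 * ε + ε * Real.logb 2 ε) * (k:ℝ) = (k:ℝ) * 1 - M * ε := by
    rw [hMdef, hLdef]; ring
  rw [hfin]
  rw [hsplit, hp1'] at hsum
  linarith
end
end

section
/- For any (possibly multi-round) perfectly secure PMT protocol over an (n, t_a, t_b, t_e, λ)-multipath setting with perfect reliability (δ = 0) and perfect secrecy (ε = 0), the secrecy rate satisfies k/c ≤ max(0, 1 − t_e/t_ab), where t_ab = min(t_a, t_b). In particular, if t_e ≥ t_ab, no perfect PMT protocol with positive rate exists. -/
/-!
Fix an eavesdropper strategy `T` and a transcript `x₀` of positive probability for some message.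
Perfect secrecy makes the eavesdropper's view of `x₀` possible under every message `s`, so we may
pick transcripts `g s` of positive probability that all agree on the eavesdropped paths. Bob
decodes each `g s` correctly, hence the `g s` already differ on the paths Bob sees but Eve does
not, and `k` is at most the number of bits on those paths. In each round Bob sees at most
`t_ab` paths, and Eve spying on the `t_e` heaviest of them leaves at most a `1 - t_e/t_ab`
fraction of their bits unseen.
-/

open Finset

section Selection

variable {α : Type*}

theorem card_mul_sum_le_card_mul_sum {R : Type*} [CommSemiring R] [PartialOrder R]
    [IsOrderedRing R] {A B : Finset α} {w : α → R} (h : ∀ a ∈ A, ∀ b ∈ B, w a ≤ w b) :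
    #B * ∑ a ∈ A, w a ≤ #A * ∑ b ∈ B, w b :=
  calc #B * ∑ a ∈ A, w a = ∑ b ∈ B, ∑ a ∈ A, w a := by simp [sum_const, nsmul_eq_mul]
    _ ≤ ∑ b ∈ B, ∑ a ∈ A, w b := sum_le_sum fun b hb => sum_le_sum fun a ha => h a ha b hb
    _ = #A * ∑ b ∈ B, w b := by simp [sum_const, nsmul_eq_mul, mul_sum]

theorem exists_subset_card_eq_forall_sdiff_le {β : Type*} [LinearOrder β] [DecidableEq α]
    (S : Finset α) (w : α → β) {t : ℕ} (ht : t ≤ #S) :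
    ∃ T ⊆ S, #T = t ∧ ∀ a ∈ S \ T, ∀ b ∈ T, w a ≤ w b := by
  induction t with
  | zero => exact ⟨∅, empty_subset S, card_empty, by simp⟩
  | succ t ih =>
    obtain ⟨T, hTS, hT, hle⟩ := ih (by omega)
    have hne : (S \ T).Nonempty := by
      rw [← card_pos, card_sdiff_of_subset hTS]; omega
    obtain ⟨c, hc, hcmax⟩ := exists_max_image (S \ T) w hne
    have hcT : c ∉ T := (mem_sdiff.1 hc).2
    refine ⟨insert c T, insert_subset (mem_sdiff.1 hc).1 hTS, by rw [card_insert_of_notMem hcT, hT],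
      fun a ha b hb => ?_⟩
    have haST : a ∈ S \ T := by
      simp only [mem_sdiff, mem_insert, not_or] at ha ⊢; exact ⟨ha.1, ha.2.2⟩
    rcases mem_insert.1 hb with rfl | hbT
    · exact hcmax a haST
    · exact hle a haST b hbT

theorem exists_subset_card_le_mul_sum_sdiff_le [DecidableEq α] (S : Finset α) (w : α → ℕ)
    (t : ℕ) {m : ℕ} (hS : #S ≤ m) :
    ∃ T ⊆ S, #T ≤ t ∧ m * ∑ i ∈ S \ T, w i ≤ (m - t) * ∑ i ∈ S, w i := by
  by_cases ht : t ≤ #S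
  swap
  · exact ⟨S, Subset.refl S, by omega, by simp⟩
  obtain ⟨T, hTS, hT, hle⟩ := exists_subset_card_eq_forall_sdiff_le S w ht
  refine ⟨T, hTS, hT.le, ?_⟩
  have hexch := card_mul_sum_le_card_mul_sum hle
  rw [card_sdiff_of_subset hTS, hT] at hexch
  rw [← sum_sdiff hTS]
  obtain ⟨d, rfl⟩ : ∃ d, m = t + d := ⟨m - t, by omega⟩
  obtain ⟨e, he⟩ : ∃ e, #S = t + e := ⟨#S - t, by omega⟩
  rw [he, Nat.add_sub_cancel_left, Nat.cast_id, Nat.cast_id] at hexch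
  rw [Nat.add_sub_cancel_left]
  have hed : e * ∑ i ∈ T, w i ≤ d * ∑ i ∈ T, w i := Nat.mul_le_mul_right _ (by omega)
  linarith

end Selection

theorem div_le_max_zero_one_sub_div {k c m t : ℕ} (hkc : k ≤ c) (h : m * k ≤ (m - t) * c) :
    (k : ℝ) / c ≤ max 0 (1 - (t : ℝ) / m) := by
  rcases Nat.eq_zero_or_pos m with rfl | hm
  -- `t / 0 = 0`, so here the bound reads `k / c ≤ 1`
  · simpa using div_le_one_of_le₀ (by exact_mod_cast hkc) (Nat.cast_nonneg c)
  have hrate : (k : ℝ) / c ≤ ((m - t : ℕ) : ℝ) / m := by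
    rcases Nat.eq_zero_or_pos c with rfl | hc
    · simp only [Nat.cast_zero, div_zero]; positivity
    rw [div_le_div_iff₀ (by positivity) (by positivity)]
    exact_mod_cast (mul_comm k m).trans_le h
  refine hrate.trans ?_
  rcases le_total t m with htm | hmt
  · refine le_max_of_le_right (le_of_eq ?_)
    rw [Nat.cast_sub htm]
    field_simp
  · simp [Nat.sub_eq_zero_of_le hmt]

theorem exists_pos_of_fiber_mass_eq {X Y : Type*} [Fintype X] [DecidableEq Y] {p q : X → ℝ}
    (hp : ∀ x, 0 ≤ p x) (f : X → Y) {x₀ : X} (hx₀ : 0 < p x₀)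
    (h : ∑ x, (if f x = f x₀ then p x else 0) = ∑ x, if f x = f x₀ then q x else 0) :
    ∃ x, 0 < q x ∧ f x = f x₀ := by
  have hmass : ∑ _x : X, (0 : ℝ) < ∑ x, if f x = f x₀ then q x else 0 := by
    rw [← h, sum_const_zero]
    exact sum_pos' (fun x _ => by split_ifs <;> simp [hp]) ⟨x₀, mem_univ _, by simpa using hx₀⟩
  obtain ⟨x, -, hx⟩ := exists_lt_of_sum_lt hmass
  by_cases hfx : f x = f x₀
  · exact ⟨x, by simpa [hfx] using hx, hfx⟩
  · simp [hfx] at hx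

section Views

variable {ι κ : Type*} {β : ι → κ → Type*} [DecidableEq κ]

/-- What an observer of the paths `A j` in round `j` sees of the transcript `x`. -/
def pathView (A : ι → Finset κ) (x : ∀ j i, β j i) : ∀ j i, Option (β j i) :=
  fun j i => if i ∈ A j then some (x j i) else none

theorem pathView_eq_pathView_iff {A : ι → Finset κ} {x y : ∀ j i, β j i} :
    pathView A x = pathView A y ↔ ∀ j, ∀ i ∈ A j, x j i = y j i := by
  simp only [pathView, funext_iff]
  refine forall_congr' fun j => ⟨fun h i hi => ?_, fun h i => ?_⟩
  · simpa [hi] using h i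
  · split_ifs with hi
    · rw [h i hi]
    · rfl

theorem card_le_card_pi_sdiff_of_perfect {σ : Type*} [Fintype σ] [Fintype ι] [DecidableEq ι]
    [Fintype κ] [∀ j i, Fintype (β j i)] [∀ j i, DecidableEq (β j i)] (B E : ι → Finset κ)
    (P : σ → (∀ j i, β j i) → ℝ) (hP0 : ∀ s x, 0 ≤ P s x) (hP1 : ∀ s, ∑ x, P s x = 1)
    (dec : (∀ j i, Option (β j i)) → σ) (hrel : ∀ s x, 0 < P s x → dec (pathView B x) = s)
    (hsec : ∀ s₁ s₂ v, ∑ x, (if pathView E x = v then P s₁ x else 0)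
      = ∑ x, if pathView E x = v then P s₂ x else 0) :
    Fintype.card σ ≤ Fintype.card (∀ j, ∀ i : ↥(B j \ E j), β j i) := by
  rcases isEmpty_or_nonempty σ with hσ | ⟨⟨s₀⟩⟩
  · simp
  obtain ⟨x₀, -, hx₀⟩ : ∃ x ∈ univ, (0 : ℝ) < P s₀ x :=
    exists_lt_of_sum_lt (by rw [sum_const_zero, hP1]; exact one_pos)
  have hcons (s : σ) : ∃ x, 0 < P s x ∧ pathView E x = pathView E x₀ :=
    exists_pos_of_fiber_mass_eq (hP0 s₀) (pathView E) hx₀ (hsec s₀ s _)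
  choose g hgpos hgview using hcons
  refine Fintype.card_le_of_injective (fun s j i => g s j i) fun s₁ s₂ hg => ?_
  rw [← hrel s₁ _ (hgpos s₁), ← hrel s₂ _ (hgpos s₂)]
  refine congrArg dec (pathView_eq_pathView_iff.2 fun j i hi => ?_)
  by_cases hiE : i ∈ E j
  · rw [pathView_eq_pathView_iff.1 (hgview s₁) j i hiE,
      pathView_eq_pathView_iff.1 (hgview s₂) j i hiE]
  · exact congrFun (congrFun hg j) ⟨i, mem_sdiff.2 ⟨hi, hiE⟩⟩

end Views

theorem card_pi_fin_two_pow {ι κ : Type*} [Fintype ι] [DecidableEq ι] [DecidableEq κ]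
    (D : ι → Finset κ) (ℓ : ι → κ → ℕ) :
    Fintype.card (∀ j, ∀ i : ↥(D j), Fin (2 ^ ℓ j i)) = 2 ^ ∑ j, ∑ i ∈ D j, ℓ j i := by
  simp [Fintype.card_pi, prod_pow_eq_pow_sum, sum_attach]

theorem perfect_pmt_rate_upper_bound_general
    (n t_a t_b t_e k r : ℕ)
    (side : Fin r → Bool) (M N : Fin r → Finset (Fin n)) (ℓ : Fin r → Fin n → ℕ)
    (hM : ∀ j, (M j).card ≤ if side j then t_a else t_b)
    (hN : ∀ j, (N j).card ≤ if side j then t_b else t_a)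
    (P : Fin (2 ^ k) → (∀ j : Fin r, ∀ i : Fin n, Fin (2 ^ ℓ j i)) → ℝ)
    (hP0 : ∀ s x, 0 ≤ P s x) (hP1 : ∀ s, ∑ x, P s x = 1)
    (dec : (∀ j : Fin r, ∀ i : Fin n, Option (Fin (2 ^ ℓ j i))) → Fin (2 ^ k))
    -- perfect reliability: Bob decodes correctly from his view of the transcript
    (hrel : ∀ s x, 0 < P s x →
      dec (fun j i => if i ∈ M j ∩ N j then some (x j i) else none) = s)
    -- perfect secrecy: for every eavesdropper strategy, the view distribution is
    -- independent of the message
    (hsec : ∀ T : Fin r → Finset (Fin n), (∀ j, (T j).card ≤ t_e) →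
      ∀ s₁ s₂ : Fin (2 ^ k), ∀ v : ∀ j : Fin r, ∀ i : Fin n, Option (Fin (2 ^ ℓ j i)),
        (∑ x, if (fun j i => if i ∈ M j ∩ T j then some (x j i) else none) = v
            then P s₁ x else 0)
        = (∑ x, if (fun j i => if i ∈ M j ∩ T j then some (x j i) else none) = v
            then P s₂ x else 0)) :
    (k : ℝ) / (∑ j, ∑ i ∈ M j, ℓ j i : ℕ) ≤
      max 0 (1 - (t_e : ℝ) / (min t_a t_b : ℕ)) := by
  have hcommon (j : Fin r) : #(M j ∩ N j) ≤ min t_a t_b := by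
    have hMN : #(M j ∩ N j) ≤ #(M j) := card_le_card inter_subset_left
    have hNM : #(M j ∩ N j) ≤ #(N j) := card_le_card inter_subset_right
    have hMj := hM j
    have hNj := hN j
    split_ifs at hMj hNj <;> omega
  choose T hTsub hTcard hT using fun j =>
    exists_subset_card_le_mul_sum_sdiff_le (M j ∩ N j) (ℓ j) t_e (hcommon j)
  have hTM (j : Fin r) : M j ∩ T j = T j := inter_eq_right.2 ((hTsub j).trans inter_subset_left)
  have hk : k ≤ ∑ j, ∑ i ∈ (M j ∩ N j) \ T j, ℓ j i := by
    have := (card_le_card_pi_sdiff_of_perfect (fun j => M j ∩ N j) (fun j => M j ∩ T j)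
      P hP0 hP1 dec hrel (hsec T hTcard)).trans_eq (card_pi_fin_two_pow _ ℓ)
    rw [Fintype.card_fin, Nat.pow_le_pow_iff_right one_lt_two] at this
    simpa only [hTM] using this
  refine div_le_max_zero_one_sub_div
    (hk.trans (sum_le_sum fun j _ => sum_le_sum_of_subset (sdiff_subset.trans inter_subset_left)))
    ?_
  calc min t_a t_b * k ≤ ∑ j, min t_a t_b * ∑ i ∈ (M j ∩ N j) \ T j, ℓ j i := by
        rw [← mul_sum]; exact Nat.mul_le_mul_left _ hk
    _ ≤ ∑ j, (min t_a t_b - t_e) * ∑ i ∈ M j, ℓ j i :=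
        sum_le_sum fun j _ =>
          (hT j).trans (Nat.mul_le_mul_left _ (sum_le_sum_of_subset inter_subset_left))
    _ = (min t_a t_b - t_e) * ∑ j, ∑ i ∈ M j, ℓ j i := by rw [mul_sum]

/-- **Upper bound on the rate of perfect PMT in the general multipath setting.**

Model: there are `n` paths and `r` rounds.  In round `j` one of the two communicants is the
sender (`side j = true` means Alice sends, `false` means Bob sends); the sender transmits on
the path set `M j` (of size at most `t_a` resp. `t_b`) and the receiver listens on the path
set `N j` (of size at most `t_b` resp. `t_a`); `ℓ j i` is the number of bits sent on path `i`
in round `j`.  For each `k`-bit message `s`, `P s` is the distribution of the full transcript.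
The receiver decodes from his view (the bits on paths in `M j ∩ N j`), and the eavesdropper
may in each round observe any set `T j` of at most `t_e` paths.

Perfect reliability (`δ = 0`): decoding is always correct on the support of `P s`.
Perfect secrecy (`ε = 0`): for every eavesdropper strategy, the distribution of the
eavesdropper's view is the same for all messages.

Conclusion: the secrecy rate satisfies `k/c ≤ max(0, 1 − t_e/t_ab)` with
`t_ab = min(t_a, t_b)` and `c = Σ_j Σ_{i ∈ M j} ℓ j i` the total number of communicated bits.
In particular, if `t_e ≥ t_ab` no perfect PMT protocol with positive rate exists. -/
theorem perfect_pmt_rate_upper_bound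
    (n t_a t_b t_e k r : ℕ) (htab : 0 < min t_a t_b)
    (side : Fin r → Bool) (M N : Fin r → Finset (Fin n)) (ℓ : Fin r → Fin n → ℕ)
    (hM : ∀ j, (M j).card ≤ if side j then t_a else t_b)
    (hN : ∀ j, (N j).card ≤ if side j then t_b else t_a)
    (P : Fin (2 ^ k) → (∀ j : Fin r, ∀ i : Fin n, Fin (2 ^ ℓ j i)) → ℝ)
    (hP0 : ∀ s x, 0 ≤ P s x) (hP1 : ∀ s, ∑ x, P s x = 1)
    (dec : (∀ j : Fin r, ∀ i : Fin n, Option (Fin (2 ^ ℓ j i))) → Fin (2 ^ k))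
    -- perfect reliability: Bob decodes correctly from his view of the transcript
    (hrel : ∀ s x, 0 < P s x →
      dec (fun j i => if i ∈ M j ∩ N j then some (x j i) else none) = s)
    -- perfect secrecy: for every eavesdropper strategy, the view distribution is
    -- independent of the message
    (hsec : ∀ T : Fin r → Finset (Fin n), (∀ j, (T j).card ≤ t_e) →
      ∀ s₁ s₂ : Fin (2 ^ k), ∀ v : ∀ j : Fin r, ∀ i : Fin n, Option (Fin (2 ^ ℓ j i)),
        (∑ x, if (fun j i => if i ∈ M j ∩ T j then some (x j i) else none) = v
            then P s₁ x else 0)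
        = (∑ x, if (fun j i => if i ∈ M j ∩ T j then some (x j i) else none) = v
            then P s₂ x else 0)) :
    (k : ℝ) / (∑ j, ∑ i ∈ M j, ℓ j i : ℕ) ≤
      max 0 (1 - (t_e : ℝ) / (min t_a t_b : ℕ)) :=
  perfect_pmt_rate_upper_bound_general n t_a t_b t_e k r side M N ℓ hM hN P hP0 hP1 dec hrel hsec
end

section
/- Given any (k, c, δ, ε)-SKE protocol over a full-access multipath setting, there exists a (k, c, 0, ε′)-SKE protocol (perfect reliability, same key length and communication) with secrecy parameter ε′ ≤ ε + δ. -/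
/-!
Both parties output the most likely value of Alice's key given the shared transcript. Given
`X = x`, Alice's and Bob's keys are independent with laws `P_x` and `Q_x`, so they agree with
probability `∑ s, P_x s * Q_x s ≤ max P_x`, which is the probability that Alice's key equals the
mode. Hence Alice's key differs from the mode with probability at most `δ`; coupling the two
keys through the same transcript, the joint law of the mode and Eve's view is within that
probability of the joint law of Alice's key and Eve's view, and the triangle inequality for
the statistical distance finishes the proof.
-/

open scoped BigOperators Classical
noncomputable section

open Finset

section MassMap

variable {Ω Ω' X : Type*} [Fintype Ω] [DecidableEq X]

def massMap (w : Ω → ℝ) (u : Ω → X) (y : X) : ℝ := ∑ ω, if u ω = y then w ω else 0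

lemma massMap_nonneg {w : Ω → ℝ} (hw : ∀ ω, 0 ≤ w ω) (u : Ω → X) (y : X) :
    0 ≤ massMap w u y :=
  sum_nonneg fun ω _ => ite_nonneg (hw ω) le_rfl

lemma sum_massMap [Fintype X] (w : Ω → ℝ) (u : Ω → X) : ∑ y, massMap w u y = ∑ ω, w ω := by
  simp only [massMap]
  rw [sum_comm]
  simp

lemma massMap_mul_comp_fst [Fintype Ω'] (p : Ω → ℝ) {q : Ω' → ℝ} (hq : ∑ a, q a = 1)
    (u : Ω → X) :
    massMap (fun ω : Ω × Ω' => p ω.1 * q ω.2) (fun ω => u ω.1) = massMap p u := by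
  ext y
  simp only [massMap, Fintype.sum_prod_type]
  refine sum_congr rfl fun x _ => ?_
  split_ifs <;> simp [← mul_sum, hq]

end MassMap

section StatisticalDistance

variable {X : Type*} [Fintype X]

lemma SD_triangle (P Q R : X → ℝ) : SD P R ≤ SD P Q + SD Q R := by
  unfold SD
  rw [← mul_add, ← sum_add_distrib]
  gcongr with x
  exact abs_sub_le _ _ _

/-- The coupling inequality. -/
theorem SD_massMap_le [DecidableEq X] {Ω : Type*} [Fintype Ω] {w : Ω → ℝ} (hw : ∀ ω, 0 ≤ w ω)
    (u v : Ω → X) : SD (massMap w u) (massMap w v) ≤ ∑ ω, if u ω ≠ v ω then w ω else 0 := by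
  set w' : Ω → ℝ := fun ω => if u ω ≠ v ω then w ω else 0
  have hw' : ∀ ω, 0 ≤ w' ω := fun ω => ite_nonneg (hw ω) le_rfl
  have hdiff : ∀ y, massMap w u y - massMap w v y = massMap w' u y - massMap w' v y := by
    intro y
    simp only [massMap, ← sum_sub_distrib]
    refine sum_congr rfl fun ω _ => ?_
    by_cases h : u ω = v ω <;> simp [w', h]
  calc SD (massMap w u) (massMap w v)
      = (1/2) * ∑ y, |massMap w' u y - massMap w' v y| := by simp only [SD, hdiff]
    _ ≤ (1/2) * ∑ y, (massMap w' u y + massMap w' v y) := by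
        gcongr with y
        have := massMap_nonneg hw' u y
        have := massMap_nonneg hw' v y
        exact abs_sub_le_iff.2 ⟨by linarith, by linarith⟩
    _ = ∑ ω, w' ω := by rw [sum_add_distrib, sum_massMap, sum_massMap]; ring

end StatisticalDistance

lemma ite_not_eq_sub (p : Prop) [Decidable p] (x : ℝ) :
    (if ¬p then x else 0) = x - if p then x else 0 := by
  split_ifs <;> simp

lemma sum_mul_le_of_forall_le {S : Type*} [Fintype S] {P Q : S → ℝ} {s₀ : S}
    (hmax : ∀ s, P s ≤ P s₀) (hQ0 : ∀ s, 0 ≤ Q s) (hQ1 : ∑ s, Q s = 1) : ∑ s, P s * Q s ≤ P s₀ :=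
  calc ∑ s, P s * Q s ≤ ∑ s, P s₀ * Q s :=
        sum_le_sum fun s _ => mul_le_mul_of_nonneg_right (hmax s) (hQ0 s)
    _ = P s₀ := by rw [← mul_sum, hQ1, mul_one]

section Mode

variable {RA RB S : Type*} [Fintype RA] [Fintype RB] [Fintype S] [DecidableEq S]

lemma sum_sum_ite_eq_eq_sum_massMap_mul (pA : RA → ℝ) (pB : RB → ℝ) (F : RA → S) (G : RB → S) :
    ∑ a, ∑ b, (if F a = G b then pA a * pB b else 0)
      = ∑ s, massMap pA F s * massMap pB G s := by
  simp only [massMap, sum_mul_sum, ite_mul, mul_ite, zero_mul, mul_zero]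
  conv_rhs => rw [sum_comm]; arg 2; ext a; rw [sum_comm]
  simp [eq_comm]

lemma sum_ite_ne_mode_le {pA : RA → ℝ} {pB : RB → ℝ} (hB0 : ∀ b, 0 ≤ pB b)
    (hB1 : ∑ b, pB b = 1) (F : RA → S) (G : RB → S) {s₀ : S}
    (hs₀ : ∀ s, massMap pA F s ≤ massMap pA F s₀) :
    ∑ a, (if F a ≠ s₀ then pA a else 0) ≤ ∑ a, ∑ b, if F a ≠ G b then pA a * pB b else 0 := by
  have hmiss : ∑ a, (if F a ≠ s₀ then pA a else 0) = ∑ a, pA a - massMap pA F s₀ := by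
    simp only [ne_eq, ite_not_eq_sub, sum_sub_distrib, massMap]
  have hdisagree : ∑ a, ∑ b, (if F a ≠ G b then pA a * pB b else 0)
      = ∑ a, pA a - ∑ s, massMap pA F s * massMap pB G s := by
    simp only [ne_eq, ite_not_eq_sub, sum_sub_distrib, ← mul_sum, hB1, mul_one,
      sum_sum_ite_eq_eq_sum_massMap_mul]
  have hagree := sum_mul_le_of_forall_le hs₀ (massMap_nonneg hB0 G) (by rw [sum_massMap, hB1])
  linarith

end Mode

lemma SD_deterministic_key_le {ΩX RA S Z : Type*} [Fintype ΩX] [Fintype RA] [Fintype S]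
    [DecidableEq S] [Fintype Z] [DecidableEq Z] {pX : ΩX → ℝ} {pA : RA → ℝ}
    (hX0 : ∀ x, 0 ≤ pX x) (hA0 : ∀ a, 0 ≤ pA a) (hA1 : ∑ a, pA a = 1)
    (f : ΩX → RA → S) (f' : ΩX → S) (ζ : ΩX → Z) :
    SD (fun sz : S × Z => ∑ x, if f' x = sz.1 ∧ ζ x = sz.2 then pX x else 0)
        (fun sz : S × Z => ∑ x, ∑ a, if f x a = sz.1 ∧ ζ x = sz.2 then pX x * pA a else 0)
      ≤ ∑ x, ∑ a, if f x a ≠ f' x then pX x * pA a else 0 := by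
  have hcoupling := SD_massMap_le (fun ω : ΩX × RA => mul_nonneg (hX0 ω.1) (hA0 ω.2))
    (fun ω => (f' ω.1, ζ ω.1)) (fun ω => (f ω.1 ω.2, ζ ω.1))
  rw [massMap_mul_comp_fst pX hA1 fun x => (f' x, ζ x)] at hcoupling
  convert hcoupling using 2
  · ext sz
    simp [massMap, Prod.ext_iff]
  · ext sz
    simp [massMap, Fintype.sum_prod_type, Prod.ext_iff]
  · simp [Fintype.sum_prod_type, eq_comm]

theorem ske_derandomization_general
    {ΩX RA RB Z : Type*} [Fintype ΩX] [Fintype RA] [Fintype RB] [Fintype Z]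
    (k : ℕ) (δ ε : ℝ)
    (pX : ΩX → ℝ) (pA : RA → ℝ) (pB : RB → ℝ)
    (hX0 : ∀ x, 0 ≤ pX x)
    (hA0 : ∀ a, 0 ≤ pA a) (hA1 : ∑ a, pA a = 1)
    (hB0 : ∀ b, 0 ≤ pB b) (hB1 : ∑ b, pB b = 1)
    (f : ΩX → RA → Fin (2 ^ k)) (g : ΩX → RB → Fin (2 ^ k)) (ζ : ΩX → Z)
    -- δ-reliability
    (hrel : (∑ x, ∑ a, ∑ b, if f x a ≠ g x b then pX x * pA a * pB b else 0) ≤ δ)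
    -- ε-secrecy of Alice's key given Eve's view
    (hsec : SD
      (fun sz : Fin (2 ^ k) × Z =>
        ∑ x, ∑ a, if f x a = sz.1 ∧ ζ x = sz.2 then pX x * pA a else 0)
      (fun sz : Fin (2 ^ k) × Z =>
        ((2 : ℝ) ^ k)⁻¹ * ∑ x, if ζ x = sz.2 then pX x else 0) ≤ ε) :
    ∃ f' g' : ΩX → Fin (2 ^ k),
      (∀ x, f' x = g' x) ∧
      SD (fun sz : Fin (2 ^ k) × Z =>
            ∑ x, if f' x = sz.1 ∧ ζ x = sz.2 then pX x else 0)
         (fun sz : Fin (2 ^ k) × Z =>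
            ((2 : ℝ) ^ k)⁻¹ * ∑ x, if ζ x = sz.2 then pX x else 0) ≤ ε + δ := by
  choose f' hmode using fun x => Finite.exists_max (massMap pA (f x))
  refine ⟨f', f', fun _ => rfl, ?_⟩
  have hmismatch : ∑ x, ∑ a, (if f x a ≠ f' x then pX x * pA a else 0) ≤ δ := by
    refine le_trans (sum_le_sum fun x _ => ?_) hrel
    have hx := sum_ite_ne_mode_le hB0 hB1 (f x) (g x) (hmode x)
    simpa only [mul_sum, mul_ite, mul_zero, mul_assoc] using mul_le_mul_of_nonneg_left hx (hX0 x)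
  calc _ ≤ _ := SD_triangle _ _ _
    _ ≤ δ + ε :=
        add_le_add ((SD_deterministic_key_le hX0 hA0 hA1 f f' ζ).trans hmismatch) hsec
    _ = ε + δ := add_comm δ ε

/-- **Derandomization of SKE in the full-access setting: perfect reliability at secrecy
cost `δ`.**

Model: in the full-access setting Alice and Bob share the transcript `X` (distributed
according to `pX`); Eve's view is `ζ(X)`.  Alice computes `S = f(X, Rnd_A)` and Bob computes
`Ŝ = g(X, Rnd_B)` with independent local randomness `Rnd_A ~ pA`, `Rnd_B ~ pB`.
Reliability: `Pr(Ŝ ≠ S) ≤ δ`.  Secrecy: `SD([S, Z], [U_k, Z]) ≤ ε`.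

Conclusion: there are deterministic key-derivation functions `f', g'` that always agree
(perfect reliability, same key length and communication) with secrecy parameter
`ε' ≤ ε + δ`. -/
theorem ske_derandomization
    {ΩX RA RB Z : Type*} [Fintype ΩX] [Fintype RA] [Fintype RB] [Fintype Z]
    (k : ℕ) (δ ε : ℝ)
    (pX : ΩX → ℝ) (pA : RA → ℝ) (pB : RB → ℝ)
    (hX0 : ∀ x, 0 ≤ pX x) (hX1 : ∑ x, pX x = 1)
    (hA0 : ∀ a, 0 ≤ pA a) (hA1 : ∑ a, pA a = 1)
    (hB0 : ∀ b, 0 ≤ pB b) (hB1 : ∑ b, pB b = 1)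
    (f : ΩX → RA → Fin (2 ^ k)) (g : ΩX → RB → Fin (2 ^ k)) (ζ : ΩX → Z)
    -- δ-reliability
    (hrel : (∑ x, ∑ a, ∑ b, if f x a ≠ g x b then pX x * pA a * pB b else 0) ≤ δ)
    -- ε-secrecy of Alice's key given Eve's view
    (hsec : SD
      (fun sz : Fin (2 ^ k) × Z =>
        ∑ x, ∑ a, if f x a = sz.1 ∧ ζ x = sz.2 then pX x * pA a else 0)
      (fun sz : Fin (2 ^ k) × Z =>
        ((2 : ℝ) ^ k)⁻¹ * ∑ x, if ζ x = sz.2 then pX x else 0) ≤ ε) :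
    ∃ f' g' : ΩX → Fin (2 ^ k),
      (∀ x, f' x = g' x) ∧
      SD (fun sz : Fin (2 ^ k) × Z =>
            ∑ x, if f' x = sz.1 ∧ ζ x = sz.2 then pX x else 0)
         (fun sz : Fin (2 ^ k) × Z =>
            ((2 : ℝ) ^ k)⁻¹ * ∑ x, if ζ x = sz.2 then pX x else 0) ≤ ε + δ :=
  ske_derandomization_general k δ ε pX pA pB hX0 hA0 hA1 hB0 hB1 f g ζ hrel hsec
end
end

section
/- Shamir's polynomial-based (k, r, m)-ramp secret sharing over F_p (with p ≥ m + r and r ≤ k ≤ m): sharing a secret S ∈ F_p^r by choosing a uniformly random polynomial f of degree < k with f(i) = S_i for 0 ≤ i ≤ r−1 and shares X_j = f(r + j − 1) for 1 ≤ j ≤ m satisfies: (i) any k shares determine S, and (ii) for any set of at most k − r share positions, the joint distribution of those shares is independent of S. -/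
/-!
Identify a coefficient vector `c : Fin k → F` with the polynomial `∑ cᵢ Xⁱ` of degree `< k`.
Reconstruction is uniqueness of interpolation: two such polynomials agreeing at `k` distinct
points are equal. Privacy is existence of interpolation: since `r + |B| ≤ k`, Lagrange
interpolation gives a coefficient vector `δ` taking the values `s' - s` at the secret positions
and `0` on `B`, and `c ↦ c + δ` is a bijection between the polynomials consistent with `(s, v)`
and those consistent with `(s', v)`.
-/

open scoped BigOperators Classical
noncomputable section

/-- Evaluation of the polynomial with coefficient vector `cf` (degree `< k`) at `x`. -/
def polyEval {F : Type*} [Field F] {k : ℕ} (cf : Fin k → F) (x : F) : F :=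
  ∑ i : Fin k, cf i * x ^ (i : ℕ)

open Polynomial

section

variable {F : Type*} [Field F] {k : ℕ}

def toPoly (c : Fin k → F) : F[X] :=
  ∑ i : Fin k, C (c i) * X ^ (i : ℕ)

theorem eval_toPoly (c : Fin k → F) (x : F) : (toPoly c).eval x = polyEval c x := by
  simp [toPoly, polyEval, eval_finsetSum]

theorem degree_toPoly_lt (c : Fin k → F) : (toPoly c).degree < k := by
  refine (degree_sum_le _ _).trans_lt ((Finset.sup_lt_iff (WithBot.bot_lt_coe k)).mpr ?_)
  intro i _
  exact (degree_C_mul_X_pow_le (i : ℕ) (c i)).trans_lt (WithBot.coe_lt_coe.mpr i.2)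

theorem polyEval_add (c c' : Fin k → F) (x : F) :
    polyEval (c + c') x = polyEval c x + polyEval c' x := by
  simp [polyEval, add_mul, Finset.sum_add_distrib]

theorem polyEval_coeff_of_degree_lt {g : F[X]} (hg : g.degree < k) (x : F) :
    polyEval (fun i : Fin k => g.coeff i) x = g.eval x := by
  rcases eq_or_ne g 0 with rfl | hg0
  · simp [polyEval]
  rw [eval_eq_sum_range' ((natDegree_lt_iff_degree_lt hg0).mpr hg), polyEval,
    Fin.sum_univ_eq_sum_range (fun i => g.coeff i * x ^ i)]

theorem polyEval_eq_of_eval_index_eq {ι : Type*} {x : ι → F} {A : Finset ι} (hx : Set.InjOn x A)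
    (hA : k ≤ A.card) {c c' : Fin k → F} (h : ∀ j ∈ A, polyEval c (x j) = polyEval c' (x j)) :
    polyEval c = polyEval c' := by
  have hdeg (d : Fin k → F) : (toPoly d).degree < A.card :=
    (degree_toPoly_lt d).trans_le (by exact_mod_cast hA)
  have hpoly : toPoly c = toPoly c' :=
    eq_of_degrees_lt_of_eval_index_eq A hx (hdeg c) (hdeg c') (by simpa [eval_toPoly] using h)
  funext y
  rw [← eval_toPoly, ← eval_toPoly, hpoly]

theorem exists_polyEval_eq_of_card_le {ι : Type*} [Fintype ι] {x : ι → F} (hx : Function.Injective x)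
    (hι : Fintype.card ι ≤ k) (w : ι → F) : ∃ c : Fin k → F, ∀ i, polyEval c (x i) = w i := by
  have hdeg : (Lagrange.interpolate Finset.univ x w).degree < k :=
    (Lagrange.degree_interpolate_lt w hx.injOn).trans_le (by exact_mod_cast hι)
  refine ⟨fun i => (Lagrange.interpolate Finset.univ x w).coeff i, fun i => ?_⟩
  rw [polyEval_coeff_of_degree_lt hdeg]
  exact Lagrange.eval_interpolate_at_node w hx.injOn (Finset.mem_univ i)

end

theorem shamir_ramp_sss_general
    {F : Type*} [Field F] [Fintype F] [DecidableEq F]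
    (r k m : ℕ) (hrk : r ≤ k)
    (α : Fin (r + m) → F) (hα : Function.Injective α) :
    -- (i) reconstruction from any k shares
    (∀ A : Finset (Fin m), k ≤ A.card → ∀ c c' : Fin k → F,
      (∀ j ∈ A, polyEval c (α (Fin.natAdd r j)) = polyEval c' (α (Fin.natAdd r j))) →
      ∀ i : Fin r, polyEval c (α (Fin.castAdd m i)) = polyEval c' (α (Fin.castAdd m i))) ∧
    -- (ii) any at most k − r shares are independent of the secret
    (∀ B : Finset (Fin m), B.card ≤ k - r → ∀ s s' : Fin r → F, ∀ v : Fin m → F,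
      Fintype.card {c : Fin k → F //
          (∀ i : Fin r, polyEval c (α (Fin.castAdd m i)) = s i) ∧
          ∀ j ∈ B, polyEval c (α (Fin.natAdd r j)) = v j}
        = Fintype.card {c : Fin k → F //
            (∀ i : Fin r, polyEval c (α (Fin.castAdd m i)) = s' i) ∧
            ∀ j ∈ B, polyEval c (α (Fin.natAdd r j)) = v j}) := by
  refine ⟨fun A hA c c' h i => ?_, fun B hB s s' v => ?_⟩
  · exact congrFun (polyEval_eq_of_eval_index_eq (hα.comp (Fin.natAdd_injective m r)).injOn hA h) _
  · set x : Fin r ⊕ B → F := α ∘ finSumFinEquiv ∘ Sum.map id Subtype.val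
    have hx : Function.Injective x :=
      hα.comp (finSumFinEquiv.injective.comp (Sum.map_injective.mpr ⟨Function.injective_id,
        Subtype.val_injective⟩))
    have hcard : Fintype.card (Fin r ⊕ B) ≤ k := by
      simp only [Fintype.card_sum, Fintype.card_fin, Fintype.card_coe]
      omega
    obtain ⟨δ, hδ⟩ := exists_polyEval_eq_of_card_le hx hcard (Sum.elim (s' - s) 0)
    refine Fintype.card_congr ((Equiv.addRight δ).subtypeEquiv fun c => ?_)
    have hsec (i : Fin r) : polyEval δ (α (Fin.castAdd m i)) = s' i - s i := hδ (Sum.inl i)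
    have hshare (j : B) : polyEval δ (α (Fin.natAdd r j)) = 0 := hδ (Sum.inr j)
    simp only [Equiv.coe_addRight, polyEval_add]
    refine and_congr (forall_congr' fun i => ?_) (forall₂_congr fun j hj => ?_)
    · rw [hsec, ← eq_sub_iff_add_eq, sub_sub_cancel]
    · rw [hshare ⟨j, hj⟩, add_zero]

/-- **Shamir's polynomial-based `(k, r, m)`-ramp secret sharing.**

Over a field `F` with at least `m + r` elements, fix `r + m` distinct evaluation points
`α : Fin (r + m) ↪ F` (the first `r` are the secret positions, the last `m` the share
positions).  A secret `S ∈ F^r` is shared by a uniformly random polynomial `f` of degree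
`< k` with `f(αᵢ) = Sᵢ` at the secret positions, the shares being the evaluations at the
share positions.  Then:
(i) any `k` shares determine the secret: two degree-`< k` polynomials agreeing on `k` share
positions have equal values at all secret positions; and
(ii) for any set `B` of at most `k − r` share positions, the joint distribution of those
shares is independent of the secret: for every secret `s` and every assignment `v` of values
on `B`, the number of degree-`< k` polynomials consistent with `(s, v)` is the same for all
secrets. -/
theorem shamir_ramp_sss
    {F : Type*} [Field F] [Fintype F] [DecidableEq F]
    (r k m : ℕ) (hrk : r ≤ k) (hkm : k ≤ m) (hcard : m + r ≤ Fintype.card F)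
    (α : Fin (r + m) → F) (hα : Function.Injective α) :
    -- (i) reconstruction from any k shares
    (∀ A : Finset (Fin m), k ≤ A.card → ∀ c c' : Fin k → F,
      (∀ j ∈ A, polyEval c (α (Fin.natAdd r j)) = polyEval c' (α (Fin.natAdd r j))) →
      ∀ i : Fin r, polyEval c (α (Fin.castAdd m i)) = polyEval c' (α (Fin.castAdd m i))) ∧
    -- (ii) any at most k − r shares are independent of the secret
    (∀ B : Finset (Fin m), B.card ≤ k - r → ∀ s s' : Fin r → F, ∀ v : Fin m → F,
      Fintype.card {c : Fin k → F //
          (∀ i : Fin r, polyEval c (α (Fin.castAdd m i)) = s i) ∧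
          ∀ j ∈ B, polyEval c (α (Fin.natAdd r j)) = v j}
        = Fintype.card {c : Fin k → F //
            (∀ i : Fin r, polyEval c (α (Fin.castAdd m i)) = s' i) ∧
            ∀ j ∈ B, polyEval c (α (Fin.natAdd r j)) = v j}) :=
  shamir_ramp_sss_general r k m hrk α hα
end
end

section
/- Assuming Δ → 0, the set of eavesdropper strengths t_e for which asymptotically-perfect PMT strictly outperforms perfect PMT (C_{∼0} > C₀) contains the interval (α·log₂(e/α)/(λ(1−α)) · n, n), where α = t_ab/n < 1: i.e., for all such t_e, (1 − t_e/n)/(1 + ξ₁) > max(0, 1 − t_e/t_ab), with ξ₁ = log₂(e n / t_ab)/(λ(1 − t_e/t_ab)) when t_e < t_ab. -/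
noncomputable section

/-- **Range of eavesdropper strengths where AP-PMT strictly outperforms P-PMT** (in the limit
`Δ → 0`).  With `α = t_ab/n ∈ (0,1)`, for every `t_e` in the interval
`(α·log₂(e/α)/(λ(1−α)) · n, n)` the AP-PMT achievable rate exceeds the P-secrecy capacity
`C₀ = max(0, 1 − t_e/t_ab)`: when `t_e < t_ab` the rate is `(1 − t_e/n)/(1 + ξ₁)` with
`ξ₁ = log₂(e n/t_ab)/(λ(1 − t_e/t_ab))`, and when `t_e ≥ t_ab` the rate is `1 − t_e/n`. -/
theorem ap_beats_perfect_range
    (n tab lam te : ℝ) (hn : 1 ≤ n) (htab0 : 0 < tab) (htabn : tab < n)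
    (hlam : 0 < lam) (hte0 : 0 < te) (hten : te < n)
    (hlow : tab / n * Real.logb 2 (Real.exp 1 / (tab / n)) / (lam * (1 - tab / n)) * n < te) :
    (te < tab →
      (1 - te / n) / (1 + Real.logb 2 (Real.exp 1 * n / tab) / (lam * (1 - te / tab))) >
        max 0 (1 - te / tab)) ∧
    (tab ≤ te → 1 - te / n > max 0 (1 - te / tab)) := by
  have hn0 : (0:ℝ) < n := lt_of_lt_of_le one_pos hn
  have harg : Real.exp 1 / (tab / n) = Real.exp 1 * n / tab := by
    field_simp
  rw [harg] at hlow
  set L := Real.logb 2 (Real.exp 1 * n / tab) with hLdef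
  have he : 1 < Real.exp 1 := by
    nlinarith [Real.add_one_le_exp (1:ℝ)]
  have hL0 : 0 < L := by
    apply Real.logb_pos one_lt_two
    have h1 : 1 < n / tab := (one_lt_div htab0).mpr htabn
    have : Real.exp 1 * n / tab = Real.exp 1 * (n / tab) := by ring
    rw [this]
    nlinarith
  have hαpos : 0 < 1 - tab / n := by
    have : tab / n < 1 := (div_lt_one hn0).mpr htabn
    linarith
  have hd : 0 < lam * (1 - tab / n) := mul_pos hlam hαpos
  have key : tab * L * n < te * lam * (n - tab) := by
    have h1 : tab / n * L / (lam * (1 - tab / n)) * n = tab * L / (lam * (1 - tab / n)) := by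
      field_simp
    rw [h1] at hlow
    have h2 : tab * L < te * (lam * (1 - tab / n)) := (div_lt_iff₀ hd).mp hlow
    have h3 : te * (lam * (1 - tab / n)) * n = te * lam * (n - tab) := by
      field_simp
    nlinarith
  constructor
  · intro hlt
    have h1 : 0 < 1 - te / tab := by
      have : te / tab < 1 := (div_lt_one htab0).mpr hlt
      linarith
    have hξ : 0 < L / (lam * (1 - te / tab)) := div_pos hL0 (mul_pos hlam h1)
    have hD : 0 < 1 + L / (lam * (1 - te / tab)) := by linarith
    rw [max_eq_right h1.le, gt_iff_lt, lt_div_iff₀ hD]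
    have hexp : (1 - te / tab) * (1 + L / (lam * (1 - te / tab)))
        = (1 - te / tab) + L / lam := by
      have h2 : tab - te ≠ 0 := sub_ne_zero.mpr hlt.ne'
      field_simp [htab0.ne', hlam.ne', h2]
    rw [hexp]
    have hgoal : L / lam < te / tab - te / n := by
      rw [div_lt_iff₀ hlam]
      have h2 : (te / tab - te / n) * lam = te * lam * (n - tab) / (tab * n) := by
        field_simp
      rw [h2, lt_div_iff₀ (mul_pos htab0 hn0)]
      nlinarith
    linarith
  · intro hge
    have h1 : 1 - te / tab ≤ 0 := by
      have : 1 ≤ te / tab := (one_le_div htab0).mpr hge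
      linarith
    rw [max_eq_left h1]
    have : te / n < 1 := (div_lt_one hn0).mpr hten
    linarith
end
end
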